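/- In the finite approximation MDP of the belief MDP with cut-offs, the reachability value is an under-approximation: for every belief b explored in the finite MDP M̄^B (with frontier beliefs b redirected to sinks b_⊤ with probability V̲(b) and b_⊥ with probability 1−V̲(b), where V̲(b) under-approximates the optimal belief value), the maximal probability of reaching T^B ∪ {b_⊤} in M̄^B is at most the maximal probability of reaching T^B from b in the full belief MDP. -/

import Mathlib

open scoped ENNReal Classical

/-- `n`-step maximal reachability probability of `T` in an MDP. -/
noncomputable def mdpMaxReachN {St A : Type*} (P : St → A → St → ℝ≥0∞) (T : Set St) :
    ℕ → St → ℝ≥0∞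
  | 0, s => if s ∈ T then 1 else 0
  | n + 1, s => if s ∈ T then 1 else ⨆ a, ∑' s', P s a s' * mdpMaxReachN P T n s'

/-- Maximal reachability probability of `T` in an MDP. -/
noncomputable def mdpMaxReach {St A : Type*} (P : St → A → St → ℝ≥0∞) (T : Set St)
    (s : St) : ℝ≥0∞ :=
  ⨆ n, mdpMaxReachN P T n s

/-- The finite approximation MDP with cut-offs: states are `B ⊕ Bool`, where `Sum.inl b`
is a belief, `Sum.inr true` is the target sink `b_⊤` and `Sum.inr false` is `b_⊥`.
Explored beliefs `b ∈ E` keep their transitions; any other belief moves (under every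
action) to `b_⊤` with probability `V̲(b)` and to `b_⊥` with probability `1 − V̲(b)`;
the sinks are absorbing. -/
noncomputable def approxP {B A : Type*} (P : B → A → B → ℝ≥0∞) (E : Set B)
    (V : B → ℝ≥0∞) : (B ⊕ Bool) → A → (B ⊕ Bool) → ℝ≥0∞
  | Sum.inl b, a, Sum.inl b' => if b ∈ E then P b a b' else 0
  | Sum.inl b, _, Sum.inr c => if b ∈ E then 0 else (if c then V b else 1 - V b)
  | Sum.inr c, _, Sum.inr c' => if c' = c then 1 else 0
  | Sum.inr _, _, Sum.inl _ => 0

/-! A least-fixed-point argument: `mdpMaxReach P T` is the least function that is `≥ 1` on `T` and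
superharmonic (`∑ P s a s' g s' ≤ g s` for every action) off `T`. In the approximation MDP, the
function equal to the true belief value on beliefs, `1` on `b_⊤` and `0` on `b_⊥` has both
properties: explored beliefs inherit superharmonicity from the belief MDP, and a frontier belief
`b` has one-step expectation `V̲(b) ≤ P_max(b ⊨ ◇T^B)`. -/

theorem ENNReal.tsum_iSup_of_monotone {α ι : Type*} [Preorder ι] [IsDirectedOrder ι]
    {f : α → ι → ℝ≥0∞} (hf : ∀ a, Monotone (f a)) :
    ∑' a, ⨆ i, f a i = ⨆ i, ∑' a, f a i := by
  simp_rw [ENNReal.tsum_eq_iSup_sum, ENNReal.finsetSum_iSup_of_monotone hf]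
  exact iSup_comm

section MaxReach

variable {St A : Type*} (P : St → A → St → ℝ≥0∞) (T : Set St)

theorem mdpMaxReachN_le_succ (n : ℕ) (s : St) :
    mdpMaxReachN P T n s ≤ mdpMaxReachN P T (n + 1) s := by
  induction n generalizing s with
  | zero => by_cases hs : s ∈ T <;> simp [mdpMaxReachN, hs]
  | succ n ih =>
    rw [mdpMaxReachN, mdpMaxReachN]
    split_ifs
    · exact le_rfl
    · gcongr with a s'
      exact ih s'

theorem mdpMaxReachN_monotone (s : St) : Monotone fun n => mdpMaxReachN P T n s :=
  monotone_nat_of_le_succ fun n => mdpMaxReachN_le_succ P T n s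

theorem one_le_mdpMaxReach {s : St} (hs : s ∈ T) : 1 ≤ mdpMaxReach P T s :=
  le_iSup_of_le 0 (by simp [mdpMaxReachN, hs])

theorem tsum_mul_mdpMaxReach_le {s : St} (hs : s ∉ T) (a : A) :
    ∑' s', P s a s' * mdpMaxReach P T s' ≤ mdpMaxReach P T s :=
  calc ∑' s', P s a s' * mdpMaxReach P T s'
      = ⨆ n, ∑' s', P s a s' * mdpMaxReachN P T n s' := by
        simp_rw [mdpMaxReach, ENNReal.mul_iSup]
        exact ENNReal.tsum_iSup_of_monotone fun s' =>
          (mdpMaxReachN_monotone P T s').const_mul' (P s a s')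
    _ ≤ ⨆ n, mdpMaxReachN P T (n + 1) s := by
        gcongr with n
        rw [mdpMaxReachN, if_neg hs]
        exact le_iSup (fun a => ∑' s', P s a s' * mdpMaxReachN P T n s') a
    _ ≤ mdpMaxReach P T s := iSup_le fun n => le_iSup (fun n => mdpMaxReachN P T n s) (n + 1)

theorem mdpMaxReach_le_of_superharmonic (g : St → ℝ≥0∞) (hT : ∀ s ∈ T, 1 ≤ g s)
    (hg : ∀ s ∉ T, ∀ a, ∑' s', P s a s' * g s' ≤ g s) (s : St) :
    mdpMaxReach P T s ≤ g s := by
  refine iSup_le fun n => ?_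
  induction n generalizing s with
  | zero => by_cases hs : s ∈ T <;> simp [mdpMaxReachN, hs, hT]
  | succ n ih =>
    rw [mdpMaxReachN]
    split_ifs with hs
    · exact hT s hs
    · refine iSup_le fun a => le_trans ?_ (hg s hs a)
      gcongr with s'
      exact ih s'

end MaxReach

section Approx

variable {B A : Type*} (P : B → A → B → ℝ≥0∞) (E : Set B) (V : B → ℝ≥0∞)

theorem tsum_approxP_inl_mul_sumElim (f : B → ℝ≥0∞) (h : Bool → ℝ≥0∞) (b : B) (a : A) :
    ∑' s, approxP P E V (Sum.inl b) a s * Sum.elim f h s =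
      if b ∈ E then ∑' b', P b a b' * f b' else V b * h true + (1 - V b) * h false := by
  rw [Summable.tsum_sum ENNReal.summable ENNReal.summable]
  by_cases hb : b ∈ E <;> simp [approxP, hb, add_comm]

theorem tsum_approxP_inr_false_mul_sumElim (f : B → ℝ≥0∞) (h : Bool → ℝ≥0∞) (a : A) :
    ∑' s, approxP P E V (Sum.inr false) a s * Sum.elim f h s = h false := by
  rw [Summable.tsum_sum ENNReal.summable ENNReal.summable]
  simp [approxP]

end Approx

theorem approx_mdp_underapproximates_general
    {B A : Type*}
    (P : B → A → B → ℝ≥0∞)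
    (TB : Set B) (E : Set B) (V : B → ℝ≥0∞)
    (hV : ∀ b, V b ≤ mdpMaxReach P TB b)
    (b : B) :
    mdpMaxReach (approxP P E V)
        ({p : B ⊕ Bool | ∃ b' ∈ TB, p = Sum.inl b'} ∪ {Sum.inr true})
        (Sum.inl b)
      ≤ mdpMaxReach P TB b := by
  let g : B ⊕ Bool → ℝ≥0∞ := Sum.elim (mdpMaxReach P TB) fun c => if c then 1 else 0
  refine mdpMaxReach_le_of_superharmonic (approxP P E V) _ g ?_ ?_ (Sum.inl b)
  · rintro s (⟨b', hb', rfl⟩ | rfl)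
    exacts [one_le_mdpMaxReach P TB hb', le_rfl]
  · rintro (b' | _ | _) hs a
    · have hb' : b' ∉ TB := fun hb' => hs (Or.inl ⟨b', hb', rfl⟩)
      rw [tsum_approxP_inl_mul_sumElim]
      by_cases hE : b' ∈ E
      · exact (if_pos hE).trans_le (tsum_mul_mdpMaxReach_le P TB hb' a)
      · simpa [g, hE] using hV b'
    · exact (tsum_approxP_inr_false_mul_sumElim P E V _ _ a).le
    · exact absurd (Or.inr rfl) hs

/-- in the finite approximation MDP of the belief MDP with cut-offs, the
reachability value under-approximates the true value: if each cut-off value satisfies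
`V̲(b) ≤ P_max^{M^B}(b ⊨ ◇T^B)`, then for every explored belief `b ∈ E`, the maximal
probability of reaching `T^B ∪ {b_⊤}` in the approximation is at most the maximal
probability of reaching `T^B` from `b` in the full belief MDP. -/
theorem approx_mdp_underapproximates
    {B A : Type*}
    (P : B → A → B → ℝ≥0∞) (hP : ∀ b a, ∑' b', P b a b' = 1)
    (TB : Set B) (E : Set B) (V : B → ℝ≥0∞)
    (hV : ∀ b, V b ≤ mdpMaxReach P TB b)
    (b : B) (hb : b ∈ E) :
    mdpMaxReach (approxP P E V)
        ({p : B ⊕ Bool | ∃ b' ∈ TB, p = Sum.inl b'} ∪ {Sum.inr true})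
        (Sum.inl b)
      ≤ mdpMaxReach P TB b :=
  approx_mdp_underapproximates_general P TB E V hV b
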